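/- Let N and M be replacement channels, N(X) = Tr[X]·ρ_N and M(X) = Tr[X]·ρ_M for fixed density matrices ρ_N and ρ_M. Then M is game-majorized by N in the channel sense (R_{ρ_{ABX}}(M) ≤ R_{ρ_{ABX}}(N) for every quantum channel gambling game ρ_{ABX}) if and only if the eigenvalue vector of ρ_M is majorized by that of ρ_N, i.e. λ(ρ_M) ≺ λ(ρ_N). -/

import Mathlib

open Matrix Kronecker
open scoped ComplexOrder

noncomputable section

open scoped Classical

/-- Square complex matrices of size `n`. -/
abbrev Mat (n : ℕ) := Matrix (Fin n) (Fin n) ℂ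

/-- Bipartite matrices on `ℂ^a ⊗ ℂ^b`. -/
abbrev BMat (a b : ℕ) := Matrix (Fin a × Fin b) (Fin a × Fin b) ℂ

/-- A density matrix: positive semidefinite with trace one. -/
def IsDensity {ι : Type} [Fintype ι] (ρ : Matrix ι ι ℂ) : Prop :=
  ρ.PosSemidef ∧ ρ.trace = 1

/-- The maximally mixed state `I/n`. -/
def uMat (n : ℕ) : Mat n := (n : ℂ)⁻¹ • 1

/-- Choi matrix of a map on matrices. -/
def choi {ι κ : Type} [Fintype ι] [DecidableEq ι]
    (Φ : Matrix ι ι ℂ → Matrix κ κ ℂ) : Matrix (ι × κ) (ι × κ) ℂ :=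
  fun p q => Φ (Matrix.single p.1 q.1 1) p.2 q.2

/-- Quantum channel: linear, trace preserving, completely positive map. -/
def IsCPTP {ι κ : Type} [Fintype ι] [DecidableEq ι] [Fintype κ]
    (Φ : Matrix ι ι ℂ → Matrix κ κ ℂ) : Prop :=
  IsLinearMap ℂ Φ ∧ (∀ X, (Φ X).trace = X.trace) ∧ (choi Φ).PosSemidef

/-- Completely positive (not necessarily trace-preserving) map. -/
def IsCP {ι κ : Type} [Fintype ι] [DecidableEq ι] [Fintype κ]
    (Φ : Matrix ι ι ℂ → Matrix κ κ ℂ) : Prop :=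
  IsLinearMap ℂ Φ ∧ (choi Φ).PosSemidef

/-- Partial trace over the first tensor factor. -/
def ptraceA {α β : Type} [Fintype α] (M : Matrix (α × β) (α × β) ℂ) :
    Matrix β β ℂ := fun j j' => ∑ i, M (i, j) (i, j')

/-- Partial trace over the second tensor factor. -/
def ptraceB {α β : Type} [Fintype β] (M : Matrix (α × β) (α × β) ℂ) :
    Matrix α α ℂ := fun i i' => ∑ j, M (i, j) (i', j)

/-- The map `Φ ⊗ id` acting on the first tensor factor. -/
def lTensorId {α α' β : Type} (Φ : Matrix α α ℂ → Matrix α' α' ℂ)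
    (X : Matrix (α × β) (α × β) ℂ) : Matrix (α' × β) (α' × β) ℂ :=
  fun p q => Φ (fun k k' => X (k, p.2) (k', q.2)) p.1 q.1

/-- The map `id ⊗ Φ` acting on the second tensor factor. -/
def rTensorId {α β β' : Type} (Φ : Matrix β β ℂ → Matrix β' β' ℂ)
    (X : Matrix (α × β) (α × β) ℂ) : Matrix (α × β') (α × β') ℂ :=
  fun p q => Φ (fun k k' => X (p.1, k) (q.1, k')) p.2 q.2

/-- `A ↛ B'` semi-causality of a bipartite channel. -/
def SemiCausal {a b b' : ℕ} (N : BMat a b → BMat a b') : Prop :=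
  ∀ M : Mat a → Mat a, IsCPTP M →
    ∀ X : BMat a b, ptraceA (N (lTensorId M X)) = ptraceA (N X)

/-- Conditional unitality of a bipartite channel. -/
def CondUnital {a b b' : ℕ} (N : BMat a b → BMat a b') : Prop :=
  ∀ ρ : Mat b, IsDensity ρ →
    ∃ σ : Mat b', IsDensity σ ∧ N (uMat a ⊗ₖ ρ) = uMat a ⊗ₖ σ

/-- Conditionally unital semi-causal channels. -/
def CUSC {a b b' : ℕ} (N : BMat a b → BMat a b') : Prop :=
  IsCPTP N ∧ CondUnital N ∧ SemiCausal N

/-- The channel `X ↦ V X V†` associated with a matrix `V`. -/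
def isomChannel {a a' : ℕ} (V : Matrix (Fin a') (Fin a) ℂ) (X : Mat a) : Mat a' :=
  V * X * Vᴴ

/-- Conditional majorization `σ ≾_A ρ`. -/
def CondMajor {a' b' a b : ℕ} (σ : BMat a' b') (ρ : BMat a b) : Prop :=
  (a ≤ a' ∧ ∃ V : Matrix (Fin a') (Fin a) ℂ, Vᴴ * V = 1 ∧
      ∃ N : BMat a b → BMat a b', CUSC N ∧ σ = lTensorId (isomChannel V) (N ρ)) ∨
  (a' ≤ a ∧ ∃ U : Matrix (Fin a) (Fin a') ℂ, Uᴴ * U = 1 ∧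
      ∃ N : BMat a b → BMat a b', CUSC N ∧ lTensorId (isomChannel U) σ = N ρ)

/-- The tensor product `ρ_{AB} ⊗ τ_{A'B'}` regrouped as a state on `(AA')(BB')`. -/
def prodState {a b a' b' : ℕ} (ρ : BMat a b) (τ : BMat a' b') :
    BMat (a * a') (b * b') := fun p q =>
  ρ ((finProdFinEquiv.symm p.1).1, (finProdFinEquiv.symm p.2).1)
    ((finProdFinEquiv.symm q.1).1, (finProdFinEquiv.symm q.2).1) *
  τ ((finProdFinEquiv.symm p.1).2, (finProdFinEquiv.symm p.2).2)
    ((finProdFinEquiv.symm q.1).2, (finProdFinEquiv.symm q.2).2)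

/-- A conditional entropy: a real function on bipartite density matrices of all
finite dimensions, monotone under conditional majorization, additive under tensor
products, and normalized to `1` on the one-qubit maximally mixed state. -/
structure CondEntropy where
  H : ∀ {a b : ℕ}, BMat a b → ℝ
  mono : ∀ {a b a' b' : ℕ} (ρ : BMat a b) (σ : BMat a' b'),
    IsDensity ρ → IsDensity σ → CondMajor σ ρ → H ρ ≤ H σ
  additive : ∀ {a b a' b' : ℕ} (ρ : BMat a b) (τ : BMat a' b'),
    IsDensity ρ → IsDensity τ → H (prodState ρ τ) = H ρ + H τ
  normalized : H (uMat 2 ⊗ₖ (1 : Mat 1)) = 1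

/-- Maximally entangled state `φ⁺` on `ℂ^d ⊗ ℂ^d`. -/
def maxEnt (d : ℕ) : BMat d d :=
  fun p q => if p.1 = p.2 ∧ q.1 = q.2 then (d : ℂ)⁻¹ else 0

/-- The sum of the `k` largest values of `f`. -/
def sumTopK {ι : Type} [Fintype ι] [DecidableEq ι] (k : ℕ) (f : ι → ℝ) : ℝ :=
  (Finset.univ.powerset.filter fun s : Finset ι => s.card ≤ k).sup'
    ⟨∅, Finset.mem_filter.mpr ⟨Finset.mem_powerset.mpr (Finset.empty_subset _), by simp⟩⟩
    fun s => ∑ i ∈ s, f i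

/-- Ky Fan `k`-norm (sum of the `k` largest eigenvalues) of a hermitian matrix. -/
def kyFan {ι : Type} [Fintype ι] [DecidableEq ι] (k : ℕ) (X : Matrix ι ι ℂ) : ℝ :=
  if h : X.IsHermitian then sumTopK k h.eigenvalues else 0

/-- The rank-one projector `|v⟩⟨v|`. -/
def projv {n : ℕ} (v : Fin n → ℂ) : Mat n := fun i j => v i * star (v j)

/-- A rank-one projective measurement, given by an orthonormal family of vectors. -/
def IsRankOneMeas {n : ℕ} (u : Fin n → Fin n → ℂ) : Prop :=
  ∀ z z', (∑ i, star (u z i) * u z' i) = if z = z' then 1 else 0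

/-- A column-stochastic matrix. -/
def ColStochastic {a c : ℕ} (T : Matrix (Fin a) (Fin c) ℝ) : Prop :=
  (∀ w z, 0 ≤ T w z) ∧ ∀ z, ∑ w, T w z = 1

/-- Reward of the bipartite gambling game `(T, 0)` (no adversary). -/
def R0 {a b c : ℕ} (T : Matrix (Fin a) (Fin c) ℝ) (ρ : BMat a b) : ℝ :=
  ⨆ u : {u : Fin b → Fin b → ℂ // IsRankOneMeas u}, ⨆ f : Fin b → Fin c,
    ∑ z, ∑ w, T w (f z) *
      kyFan (w.1 + 1)
        (ptraceB (((1 : Mat a) ⊗ₖ projv (u.1 z)) * ρ * ((1 : Mat a) ⊗ₖ projv (u.1 z))))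

/-- Reward of the bipartite gambling game `(T, p)`. -/
def Rgame {a b c : ℕ} (T : Matrix (Fin a) (Fin c) ℝ) (p : ℝ) (ρ : BMat a b) : ℝ :=
  p * (⨅ v : {v : Fin a → Fin a → ℂ // IsRankOneMeas v},
        R0 T (∑ j, (projv (v.1 j) ⊗ₖ (1 : Mat b)) * ρ * (projv (v.1 j) ⊗ₖ (1 : Mat b)))) +
  (1 - p) * R0 T ρ

/-- Reward of a quantum-channel gambling game `ρ_{ABX} = Σ_x p_x ρ^{(x)}_{AB} ⊗ |x⟩⟨x|`
for a channel `N` with output system `A`. -/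
def Rch {n m dA b ℓ : ℕ} (N : Mat n → Mat m)
    (p : Fin ℓ → ℝ) (ρx : Fin ℓ → BMat dA b) : ℝ :=
  ⨆ E : {E : Mat dA → Mat n // IsCPTP E},
    ∑ x, p x * kyFan (x.1 + 1) (lTensorId (fun Y => N (E.1 Y)) (ρx x))

/-- The classical channel induced by a column-stochastic transition matrix. -/
def classicalChannel {x y : ℕ} (P : Matrix (Fin y) (Fin x) ℝ) : Mat x → Mat y :=
  fun ρ => Matrix.of fun i j => if i = j then ∑ k, (P i k : ℂ) * ρ k k else 0

/-- Classical game reward `Prob_T` of a classical channel with transition matrix `P`. -/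
def ProbT {yd xd wn zn : ℕ} (P : Matrix (Fin yd) (Fin xd) ℝ)
    (T : Matrix (Fin wn) (Fin zn) ℝ) : ℝ :=
  ∑ z, ⨆ x : Fin xd, ∑ w, T w z * sumTopK (w.1 + 1) (fun i => P i x)

/-- A joint probability matrix. -/
def JointProb {m n : ℕ} (P : Matrix (Fin m) (Fin n) ℝ) : Prop :=
  (∀ x y, 0 ≤ P x y) ∧ ∑ x, ∑ y, P x y = 1

/-- A row-stochastic matrix. -/
def RowStochastic {n n' : ℕ} (t : Matrix (Fin n) (Fin n') ℝ) : Prop :=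
  (∀ y w, 0 ≤ t y w) ∧ ∀ y, ∑ w, t y w = 1

/-- A doubly stochastic matrix. -/
def IsDoublyStochastic {m : ℕ} (d : Matrix (Fin m) (Fin m) ℝ) : Prop :=
  (∀ i j, 0 ≤ d i j) ∧ (∀ i, ∑ j, d i j = 1) ∧ (∀ j, ∑ i, d i j = 1)

/-- The quantum channel induced by a (doubly) stochastic matrix. -/
def dsChannel {m : ℕ} (d : Matrix (Fin m) (Fin m) ℝ) : Mat m → Mat m :=
  fun ρ => Matrix.of fun x x' => if x = x' then ∑ y, (d x y : ℂ) * ρ y y else 0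

/-- Diagonal bipartite state associated with a joint probability matrix. -/
def classicalState {m n : ℕ} (P : Matrix (Fin m) (Fin n) ℝ) : BMat m n :=
  Matrix.of fun p q => if p = q then (P p.1 p.2 : ℂ) else 0

/-- von Neumann entropy `S(ρ) = -Σ λ_i log₂ λ_i`. -/
def vnEntropy {ι : Type} [Fintype ι] [DecidableEq ι] (ρ : Matrix ι ι ℂ) : ℝ :=
  if h : ρ.IsHermitian then -∑ i, h.eigenvalues i * Real.logb 2 (h.eigenvalues i) else 0

/-- von Neumann conditional entropy `H(A|B) = S(ρ_AB) - S(ρ_B)`. -/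
def condVN {a b : ℕ} (ρ : BMat a b) : ℝ := vnEntropy ρ - vnEntropy (ptraceA ρ)

/-- Classical game reward for a classical bipartite state with joint distribution `q`
(`y` on `A`, `z` on `B`). -/
def ProbTstate {a b c : ℕ} (T : Matrix (Fin a) (Fin c) ℝ)
    (q : Matrix (Fin a) (Fin b) ℝ) : ℝ :=
  ∑ z, ⨆ z' : Fin c, ∑ w, T w z' * sumTopK (w.1 + 1) (fun y => q y z)


/-!
Composing any channel with a replacement channel `X ↦ Tr X • ρ` gives that replacement channel
again, so its reward in a game is `Σ_x p_x ‖ρ ⊗ ρ_B^(x)‖_(x)` with `ρ_B^(x)` the marginal on `B`.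
The eigenvalues of `ρ ⊗ σ` are the products `λ_i(ρ) λ_j(σ)`, and tensoring with the nonnegative
vector `λ(σ)` preserves majorization, so `λ(ρ_M) ≺ λ(ρ_N)` gives game majorization. Conversely,
the game with trivial `AB` that asks for the Ky Fan `k`-norm with certainty has reward
`Σ_{i ≤ k} λ_i(ρ)`, the `k`-th partial sum of the decreasingly ordered eigenvalues.
-/

section sumTopK

variable {ι κ μ : Type} [Fintype ι] [DecidableEq ι] [Fintype κ] [DecidableEq κ]
  [Fintype μ] [DecidableEq μ]

lemma sum_le_sumTopK {k : ℕ} (f : ι → ℝ) {s : Finset ι} (hs : s.card ≤ k) :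
    ∑ i ∈ s, f i ≤ sumTopK k f :=
  Finset.le_sup' (fun s => ∑ i ∈ s, f i)
    (Finset.mem_filter.mpr ⟨Finset.mem_powerset.mpr s.subset_univ, hs⟩)

lemma sumTopK_le {k : ℕ} {f : ι → ℝ} {c : ℝ}
    (h : ∀ s : Finset ι, s.card ≤ k → ∑ i ∈ s, f i ≤ c) : sumTopK k f ≤ c :=
  Finset.sup'_le _ _ fun s hs => h s (Finset.mem_filter.mp hs).2

lemma exists_sumTopK_eq_sum (k : ℕ) (f : ι → ℝ) :
    ∃ s : Finset ι, s.card ≤ k ∧ sumTopK k f = ∑ i ∈ s, f i := by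
  obtain ⟨s, hs, h⟩ := Finset.exists_mem_eq_sup' _ (fun s => ∑ i ∈ s, f i)
  exact ⟨s, (Finset.mem_filter.mp hs).2, h⟩

lemma sumTopK_zero (f : ι → ℝ) : sumTopK 0 f = 0 :=
  le_antisymm (sumTopK_le fun s hs => by simp [Finset.card_eq_zero.mp (Nat.le_zero.mp hs)])
    (by simpa using sum_le_sumTopK f (s := ∅) le_rfl)

lemma sumTopK_comp_equiv (k : ℕ) (e : ι ≃ κ) (f : κ → ℝ) : sumTopK k (f ∘ e) = sumTopK k f := by
  have le_of_equiv : ∀ {α β : Type} [Fintype α] [DecidableEq α] [Fintype β] [DecidableEq β]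
      (e : α ≃ β) (f : β → ℝ), sumTopK k (f ∘ e) ≤ sumTopK k f := fun e f =>
    sumTopK_le fun s hs => by
      simpa [Finset.sum_map] using sum_le_sumTopK f (s := s.map e.toEmbedding) (by simpa using hs)
  refine le_antisymm (le_of_equiv e f) ?_
  simpa [Function.comp_def] using le_of_equiv e.symm (f ∘ e)

/-- Choosing for every `j` a set of `c j` best indices of `h` builds one admissible set for
the products `h i * g j`. -/
lemma sum_mul_sumTopK_le_sumTopK {k : ℕ} (g : μ → ℝ) (h : κ → ℝ)
    (c : μ → ℕ) (hc : ∑ j, c j ≤ k) :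
    ∑ j, g j * sumTopK (c j) h ≤ sumTopK k (fun p : κ × μ => h p.1 * g p.2) := by
  choose t htc hth using fun j => exists_sumTopK_eq_sum (c j) h
  have hT : ∀ p : κ × μ, p ∈ Finset.univ.filter (fun p : κ × μ => p.1 ∈ t p.2) ↔
      p.2 ∈ Finset.univ ∧ p.1 ∈ t p.2 := by simp
  have hcard : (Finset.univ.filter fun p : κ × μ => p.1 ∈ t p.2).card ≤ k := by
    rw [Finset.card_eq_sum_ones, Finset.sum_finset_product_right _ _ _ hT]
    simpa using (Finset.sum_le_sum fun j _ => htc j).trans hc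
  calc ∑ j, g j * sumTopK (c j) h
      = ∑ p ∈ Finset.univ.filter (fun p : κ × μ => p.1 ∈ t p.2), h p.1 * g p.2 := by
        rw [Finset.sum_finset_product_right _ _ _ hT]
        simp only [hth, Finset.mul_sum, mul_comm]
    _ ≤ _ := sum_le_sumTopK _ hcard

/-- Cut `s` into the slices `{i | (i, j) ∈ s}` and compare each slice with the best indices
of `h` of the same size. -/
lemma sumTopK_mul_le_sumTopK_mul {f : ι → ℝ} {h : κ → ℝ} {g : μ → ℝ} (hg : ∀ j, 0 ≤ g j)
    (hfh : ∀ j : ℕ, sumTopK j f ≤ sumTopK j h) (k : ℕ) :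
    sumTopK k (fun p : ι × μ => f p.1 * g p.2) ≤ sumTopK k (fun p : κ × μ => h p.1 * g p.2) := by
  refine sumTopK_le fun s hs => ?_
  set slice : μ → Finset ι := fun j => Finset.univ.filter fun i => (i, j) ∈ s
  have hs_slice : ∀ p : ι × μ, p ∈ s ↔ p.2 ∈ Finset.univ ∧ p.1 ∈ slice p.2 := by simp [slice]
  have hcard : ∑ j, (slice j).card ≤ k := by
    rw [Finset.card_eq_sum_ones, Finset.sum_finset_product_right _ _ _ hs_slice] at hs
    simpa using hs
  calc ∑ p ∈ s, f p.1 * g p.2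
      = ∑ j, g j * ∑ i ∈ slice j, f i := by
        rw [Finset.sum_finset_product_right _ _ _ hs_slice]
        simp only [Finset.mul_sum, mul_comm]
    _ ≤ ∑ j, g j * sumTopK (slice j).card h := by
        gcongr with j
        · exact hg j
        · exact (sum_le_sumTopK f le_rfl).trans (hfh _)
    _ ≤ _ := sum_mul_sumTopK_le_sumTopK g h _ hcard

end sumTopK

lemma exists_equiv_comp_eq_of_map_univ_eq {α β γ : Type} [Fintype α] [Fintype β]
    [DecidableEq γ] {f : α → γ} {g : β → γ}
    (h : Finset.univ.val.map f = Finset.univ.val.map g) : ∃ e : α ≃ β, g ∘ e = f := by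
  have hfiber : ∀ c, Fintype.card {a // f a = c} = Fintype.card {b // g b = c} := fun c => by
    have := congrArg (Multiset.count c) h
    simp only [Multiset.count_map, eq_comm (a := c)] at this
    simpa [Fintype.card_subtype, Finset.card_def, Finset.filter_val] using this
  exact ⟨Equiv.ofFiberEquiv fun c => Fintype.equivOfCardEq (hfiber c),
    funext (Equiv.ofFiberEquiv_map _)⟩

lemma Matrix.IsHermitian.kronecker {ι κ R : Type} [CommSemiring R] [StarRing R]
    {A : Matrix ι ι R} {B : Matrix κ κ R} (hA : A.IsHermitian) (hB : B.IsHermitian) :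
    (A ⊗ₖ B).IsHermitian := by
  rw [IsHermitian, conjTranspose_kronecker, hA.eq, hB.eq]

section spectrum

variable {ι κ : Type} [Fintype ι] [DecidableEq ι] [Fintype κ] [DecidableEq κ]

/-- Conjugating by `U ⊗ V`, where `U` and `V` diagonalize `A` and `B`, diagonalizes `A ⊗ B`;
the eigenvalues are then read off the characteristic polynomial. -/
lemma Matrix.IsHermitian.map_eigenvalues_kronecker {𝕜 : Type} [RCLike 𝕜]
    {A : Matrix ι ι 𝕜} {B : Matrix κ κ 𝕜} (hA : A.IsHermitian) (hB : B.IsHermitian) :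
    Finset.univ.val.map (hA.kronecker hB).eigenvalues =
      Finset.univ.val.map fun p : ι × κ => hA.eigenvalues p.1 * hB.eigenvalues p.2 := by
  set W : Matrix (ι × κ) (ι × κ) 𝕜 := (hA.eigenvectorUnitary : Matrix ι ι 𝕜) ⊗ₖ
    (hB.eigenvectorUnitary : Matrix κ κ 𝕜)
  have hW : star W * W = 1 :=
    (kronecker_mem_unitary hA.eigenvectorUnitary.2 hB.eigenvectorUnitary.2).1
  have hdiag : A ⊗ₖ B = W * diagonal (fun p : ι × κ =>
      ((hA.eigenvalues p.1 * hB.eigenvalues p.2 : ℝ) : 𝕜)) * star W := by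
    conv_lhs => rw [hA.spectral_theorem, hB.spectral_theorem]
    simp only [Unitary.conjStarAlgAut_apply, mul_kronecker_mul, diagonal_kronecker_diagonal,
      star_eq_conjTranspose, conjTranspose_kronecker, W]
    congr 3
    ext p
    simp
  have hchar : (A ⊗ₖ B).charpoly = ∏ p : ι × κ,
      (Polynomial.X - Polynomial.C ((hA.eigenvalues p.1 * hB.eigenvalues p.2 : ℝ) : 𝕜)) := by
    rw [hdiag, charpoly_mul_comm, ← mul_assoc, hW, one_mul, charpoly_diagonal]
  apply Multiset.map_injective (RCLike.ofReal_injective (K := 𝕜))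
  rw [Multiset.map_map, Multiset.map_map, ← IsHermitian.roots_charpoly_eq_eigenvalues, hchar,
    Polynomial.roots_prod _ _ (Finset.prod_ne_zero_iff.mpr fun p _ => Polynomial.X_sub_C_ne_zero _)]
  simp only [Polynomial.roots_X_sub_C, Multiset.bind_singleton]
  rfl

lemma kyFan_kronecker {A : Matrix ι ι ℂ} {B : Matrix κ κ ℂ} (hA : A.IsHermitian)
    (hB : B.IsHermitian) (k : ℕ) :
    kyFan k (A ⊗ₖ B) = sumTopK k fun p : ι × κ => hA.eigenvalues p.1 * hB.eigenvalues p.2 := by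
  obtain ⟨e, he⟩ := exists_equiv_comp_eq_of_map_univ_eq (hA.map_eigenvalues_kronecker hB)
  rw [kyFan, dif_pos (hA.kronecker hB), ← he, sumTopK_comp_equiv]

lemma kyFan_kronecker_one_of_unique [Unique κ] {A : Matrix ι ι ℂ} (hA : A.IsHermitian)
    (k : ℕ) : kyFan k (A ⊗ₖ (1 : Matrix κ κ ℂ)) = sumTopK k hA.eigenvalues := by
  have hone : ∀ j, (isHermitian_one (α := ℂ) (n := κ)).eigenvalues j = 1 := fun j => by
    have := (isHermitian_one (α := ℂ) (n := κ)).trace_eq_sum_eigenvalues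
    rw [Fintype.sum_unique, trace_one, Fintype.card_unique, Subsingleton.elim default j] at this
    simpa using this.symm
  rw [kyFan_kronecker hA isHermitian_one]
  simpa [hone, Function.comp_def] using sumTopK_comp_equiv k (Equiv.prodUnique ι κ) hA.eigenvalues

end spectrum

lemma ptraceA_eq_sum_submatrix {α β : Type} [Fintype α] (X : Matrix (α × β) (α × β) ℂ) :
    ptraceA X = ∑ i, X.submatrix (Prod.mk i) (Prod.mk i) := by
  ext j j'
  simp [ptraceA, Matrix.sum_apply]

lemma Matrix.PosSemidef.ptraceA {α β : Type} [Fintype α] [Fintype β]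
    {X : Matrix (α × β) (α × β) ℂ} (hX : X.PosSemidef) : (ptraceA X).PosSemidef := by
  rw [ptraceA_eq_sum_submatrix]
  exact posSemidef_sum _ fun i _ => hX.submatrix _

lemma isDensity_diagonal_single {ι : Type} [Fintype ι] [DecidableEq ι] (i : ι) :
    IsDensity (diagonal (Pi.single i 1 : ι → ℂ)) :=
  ⟨PosSemidef.diagonal (Pi.single_nonneg.mpr zero_le_one), by simp [trace_diagonal]⟩

lemma lTensorId_replacement {α β κ : Type} [Fintype α] (ρ : Matrix κ κ ℂ)
    (X : Matrix (α × β) (α × β) ℂ) :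
    lTensorId (fun Y : Matrix α α ℂ => Y.trace • ρ) X = ρ ⊗ₖ ptraceA X := by
  ext ⟨i, j⟩ ⟨i', j'⟩
  simp only [lTensorId, kroneckerMap_apply, Matrix.smul_apply, smul_eq_mul, trace, diag, ptraceA]
  exact mul_comm _ _

lemma choi_replacement {α κ : Type} [Fintype α] [DecidableEq α] (σ : Matrix κ κ ℂ) :
    choi (fun Y : Matrix α α ℂ => Y.trace • σ) = (1 : Matrix α α ℂ) ⊗ₖ σ := by
  ext ⟨i, j⟩ ⟨i', j'⟩
  by_cases h : i = i'
  · subst h; simp [choi]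
  · simp [choi, trace_single_eq_of_ne _ _ _ h, h]

lemma isCPTP_replacement {α κ : Type} [Fintype α] [DecidableEq α] [Fintype κ]
    {σ : Matrix κ κ ℂ} (hσ : IsDensity σ) :
    IsCPTP (fun Y : Matrix α α ℂ => Y.trace • σ) := by
  refine ⟨⟨fun X Y => by simp only [trace_add, add_smul], fun c X => by
    simp only [trace_smul, smul_assoc]⟩, fun X => by simp [trace_smul, hσ.2], ?_⟩
  rw [choi_replacement]
  exact PosSemidef.one.kronecker hσ.1

/-- Every channel `E` followed by a replacement channel is that replacement channel, so the
supremum in `Rch` is over a constant (and nonempty) family. -/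
lemma Rch_replacement {n m dA b ℓ : ℕ} (hn : 0 < n) (ρ : Mat m) (p : Fin ℓ → ℝ)
    (ρx : Fin ℓ → BMat dA b) :
    Rch (fun X : Mat n => X.trace • ρ) p ρx =
      ∑ x, p x * kyFan (x.1 + 1) (ρ ⊗ₖ ptraceA (ρx x)) := by
  have : Nonempty {E : Mat dA → Mat n // IsCPTP E} :=
    ⟨⟨_, isCPTP_replacement (isDensity_diagonal_single (⟨0, hn⟩ : Fin n))⟩⟩
  calc Rch (fun X : Mat n => X.trace • ρ) p ρx
      = ⨆ _ : {E : Mat dA → Mat n // IsCPTP E},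
          ∑ x, p x * kyFan (x.1 + 1) (ρ ⊗ₖ ptraceA (ρx x)) :=
        iSup_congr fun E => by simp only [E.2.2.1, lTensorId_replacement]
    _ = _ := ciSup_const

/-- The game with a trivial system `AB` that always asks for the Ky Fan `(k+1)`-norm. -/
lemma Rch_replacement_single {n m : ℕ} (hn : 0 < n) {ρ : Mat m} (hρ : ρ.IsHermitian) (k : ℕ) :
    Rch (fun X : Mat n => X.trace • ρ) (Pi.single (Fin.last k) 1) (fun _ => (1 : BMat 1 1)) =
      sumTopK (k + 1) hρ.eigenvalues := by
  have hptrace : ptraceA (1 : BMat 1 1) = 1 := by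
    ext j j'
    obtain rfl := Subsingleton.elim j j'
    simp [ptraceA]
  rw [Rch_replacement hn, Fintype.sum_eq_single (Fin.last k) fun x hx => by simp [hx], hptrace,
    kyFan_kronecker_one_of_unique hρ]
  simp

/-- for replacement channels, channel game-majorization reduces to
eigenvalue majorization of the output states. -/
theorem replacement_channel_majorization {nM nN mM mN : ℕ} (hnM : 0 < nM) (hnN : 0 < nN)
    (ρM : Mat mM) (ρN : Mat mN) (hM : IsDensity ρM) (hN : IsDensity ρN) :
    (∀ (dA b ℓ : ℕ) (p : Fin ℓ → ℝ) (ρx : Fin ℓ → BMat dA b),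
        (∀ x, 0 ≤ p x) → (∑ x, p x) = 1 → (∀ x, IsDensity (ρx x)) →
        Rch (fun X : Mat nM => X.trace • ρM) p ρx ≤
          Rch (fun X : Mat nN => X.trace • ρN) p ρx) ↔
      ∀ k : ℕ, sumTopK k hM.1.1.eigenvalues ≤ sumTopK k hN.1.1.eigenvalues := by
  constructor
  · intro H k
    cases k with
    | zero => simp only [sumTopK_zero, le_refl]
    | succ k =>
      have hgame := H 1 1 (k + 1) (Pi.single (Fin.last k) 1) (fun _ => 1)
        (fun x => by by_cases hx : x = Fin.last k <;> simp [hx]) (by simp)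
        fun _ => ⟨PosSemidef.one, by simp⟩
      rwa [Rch_replacement_single hnM hM.1.1, Rch_replacement_single hnN hN.1.1] at hgame
  · intro H dA b ℓ p ρx hp _ hρx
    rw [Rch_replacement hnM, Rch_replacement hnN]
    gcongr with x
    · exact hp x
    have hσ := (hρx x).1.ptraceA
    rw [kyFan_kronecker hM.1.1 hσ.1, kyFan_kronecker hN.1.1 hσ.1]
    exact sumTopK_mul_le_sumTopK_mul hσ.eigenvalues_nonneg H _
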